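/- Correctness of sampling-based choice selection: let A be a nonempty finite set and for each a ∈ A let X_{a,1}, …, X_{a,N} be independent random variables on a probability space, each taking values in [0,1] and each with mean μ_a. Let ε > 0, 0 < δ ≤ 1, and N ≥ log(2|A|/δ) / (2ε²), and let â be any (random) element of A maximizing the empirical mean a ↦ (1/N) ∑_{i=1}^N X_{a,i}. Then with probability at least 1 − δ, μ_â ≥ max_{a ∈ A} μ_a − 2ε. -/

import Mathlib

/-!
By Hoeffding's lemma each centred sample is sub-Gaussian with variance proxy `1/4`, so the
empirical mean of a choice deviates from its mean by at least `ε` with probability at most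
`2 exp (-2 N ε²) ≤ δ / |A|`. Outside the union of these `|A|` events all estimates are
`ε`-accurate, and then an empirical maximiser loses at most `2ε` against a true maximiser.
-/

open MeasureTheory ProbabilityTheory Real Finset
open scoped NNReal

namespace ProbabilityTheory.HasSubgaussianMGF

variable {Ω : Type*} [MeasurableSpace Ω] {μ : Measure Ω} [IsFiniteMeasure μ]
  {X : Ω → ℝ} {c : ℝ≥0}

lemma measure_abs_ge_le (h : HasSubgaussianMGF X c μ) {ε : ℝ} (hε : 0 ≤ ε) :
    μ.real {ω | ε ≤ |X ω|} ≤ 2 * exp (-ε ^ 2 / (2 * c)) := by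
  have hsplit : {ω | ε ≤ |X ω|} ⊆ {ω | ε ≤ X ω} ∪ {ω | ε ≤ (-X) ω} := fun ω hω ↦ by
    simp only [Set.mem_ofPred_eq, le_abs', Set.mem_union, Pi.neg_apply] at hω ⊢
    exact hω.symm.imp_right le_neg_of_le_neg
  calc μ.real {ω | ε ≤ |X ω|}
      ≤ μ.real {ω | ε ≤ X ω} + μ.real {ω | ε ≤ (-X) ω} :=
        (measureReal_mono hsplit).trans (measureReal_union_le _ _)
    _ ≤ exp (-ε ^ 2 / (2 * c)) + exp (-ε ^ 2 / (2 * c)) :=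
        add_le_add (h.measure_ge_le hε) (h.neg.measure_ge_le hε)
    _ = 2 * exp (-ε ^ 2 / (2 * c)) := (two_mul _).symm

end ProbabilityTheory.HasSubgaussianMGF

section Hoeffding

variable {Ω : Type*} [MeasurableSpace Ω] {μ : Measure Ω} [IsProbabilityMeasure μ]

lemma hasSubgaussianMGF_sum_sub_integral_of_mem_Icc {ι : Type*} {Y : ι → Ω → ℝ}
    (hmeas : ∀ i, Measurable (Y i)) (hindep : iIndepFun Y μ) {a b : ℝ}
    (hbdd : ∀ i, ∀ᵐ ω ∂μ, Y i ω ∈ Set.Icc a b) (s : Finset ι) :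
    HasSubgaussianMGF (fun ω ↦ ∑ i ∈ s, (Y i ω - μ[Y i])) (#s * (‖b - a‖₊ / 2) ^ 2) μ := by
  have hcentered : iIndepFun (fun i ω ↦ Y i ω - μ[Y i]) μ :=
    (hindep.comp (fun i x ↦ x - μ[Y i]) fun _ ↦ measurable_id.sub_const _ :)
  simpa using HasSubgaussianMGF.sum_of_iIndepFun hcentered (s := s)
    fun i _ ↦ hasSubgaussianMGF_of_mem_Icc (hmeas i).aemeasurable (hbdd i)

lemma measure_abs_empiricalMean_sub_ge_le {N : ℕ} (hN : 0 < N) {Y : Fin N → Ω → ℝ}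
    (hmeas : ∀ i, Measurable (Y i)) (hindep : iIndepFun Y μ)
    (hbdd : ∀ i ω, Y i ω ∈ Set.Icc (0 : ℝ) 1) {m : ℝ} (hmean : ∀ i, μ[Y i] = m)
    {ε : ℝ} (hε : 0 ≤ ε) :
    μ.real {ω | ε ≤ |(1 / (N : ℝ)) * ∑ i, Y i ω - m|} ≤ 2 * exp (-(2 * N * ε ^ 2)) := by
  have hN' : (0 : ℝ) < N := Nat.cast_pos.2 hN
  have hsub := hasSubgaussianMGF_sum_sub_integral_of_mem_Icc hmeas hindep
    (fun i ↦ ae_of_all μ (hbdd i)) univ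
  have hevent : {ω | ε ≤ |(1 / (N : ℝ)) * ∑ i, Y i ω - m|}
      = {ω | N * ε ≤ |∑ i, (Y i ω - μ[Y i])|} := by
    ext ω
    simp only [Set.mem_ofPred_eq, hmean, sum_sub_distrib, sum_const, card_univ,
      Fintype.card_fin, nsmul_eq_mul]
    rw [← mul_le_mul_iff_of_pos_left hN', ← abs_of_pos hN', ← abs_mul, abs_of_pos hN']
    field_simp
  rw [hevent]
  refine (hsub.measure_abs_ge_le (ε := N * ε) (by positivity)).trans_eq ?_
  simp
  field_simp

end Hoeffding

lemma two_mul_exp_neg_le_div_of_log_div_le {K δ ε N : ℝ} (hK : 0 < K) (hδ : 0 < δ) (hε : 0 < ε)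
    (hN : log (2 * K / δ) / (2 * ε ^ 2) ≤ N) :
    2 * exp (-(2 * N * ε ^ 2)) ≤ δ / K := by
  have hlog : log (2 * K / δ) ≤ 2 * N * ε ^ 2 := by
    rw [div_le_iff₀ (by positivity)] at hN
    linarith
  calc 2 * exp (-(2 * N * ε ^ 2))
      ≤ 2 * exp (-log (2 * K / δ)) := by gcongr
    _ = δ / K := by
      rw [exp_neg, exp_log (by positivity)]
      field_simp

lemma sup'_le_add_two_mul_of_abs_sub_lt {A : Type*} {s : Finset A} (hs : s.Nonempty)
    {f m : A → ℝ} {ε : ℝ} (hfm : ∀ a ∈ s, |f a - m a| < ε) {b : A} (hb : b ∈ s)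
    (hmax : ∀ a ∈ s, f a ≤ f b) :
    s.sup' hs m ≤ m b + 2 * ε := by
  refine sup'_le hs m fun a ha ↦ ?_
  have ha' := abs_sub_lt_iff.1 (hfm a ha)
  have hb' := abs_sub_lt_iff.1 (hfm b hb)
  linarith [hmax a ha]

/-- Correctness of sampling-based choice selection: under the setting of the uniform
sample-complexity bound (finite nonempty `A`, for each `a` independent `[0,1]`-valued
samples `X a 1, …, X a N` with mean `m a`, `ε > 0`, `0 < δ ≤ 1`,
`N ≥ log (2|A|/δ) / (2ε²)`), if `â : Ω → A` is any (random) maximizer of the empirical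
mean `a ↦ (1/N) ∑ i, X a i`, then with probability at least `1 - δ`,
`m (â ω) ≥ max_a m a - 2ε`. -/
theorem sampling_based_choice_selection
    {Ω : Type*} [MeasurableSpace Ω] (μ : Measure Ω) [IsProbabilityMeasure μ]
    {A : Type*} [Fintype A] [Nonempty A]
    (N : ℕ) (X : A → Fin N → Ω → ℝ) (m : A → ℝ)
    (hmeas : ∀ (a : A) (i : Fin N), Measurable (X a i))
    (hindep : ∀ a : A,
      iIndepFun (X a) μ)
    (hbdd : ∀ (a : A) (i : Fin N) (ω : Ω), X a i ω ∈ Set.Icc (0 : ℝ) 1)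
    (hmean : ∀ (a : A) (i : Fin N), ∫ ω, X a i ω ∂μ = m a)
    (ε δ : ℝ) (hε : 0 < ε) (hδ0 : 0 < δ) (hδ1 : δ ≤ 1)
    (hN : (N : ℝ) ≥ Real.log (2 * Fintype.card A / δ) / (2 * ε ^ 2))
    (ahat : Ω → A)
    (hahat : ∀ (ω : Ω) (a : A),
      (1 / (N : ℝ)) * ∑ i : Fin N, X a i ω ≤ (1 / (N : ℝ)) * ∑ i : Fin N, X (ahat ω) i ω) :
    ENNReal.ofReal (1 - δ) ≤
      μ {ω : Ω | m (ahat ω) ≥ Finset.univ.sup' Finset.univ_nonempty m - 2 * ε} := by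
  have hK : (1 : ℝ) ≤ Fintype.card A := Nat.one_le_cast.2 Fintype.card_pos
  have hNpos : 0 < N := by
    have hlog : 0 < log (2 * Fintype.card A / δ) := log_pos ((one_lt_div hδ0).2 (by linarith))
    exact_mod_cast (div_pos hlog (by positivity)).trans_le hN
  set bad : A → Set Ω := fun a ↦ {ω | ε ≤ |(1 / (N : ℝ)) * ∑ i, X a i ω - m a|}
  have hbad : μ.real (⋃ a, bad a) ≤ δ := calc
    μ.real (⋃ a, bad a) ≤ ∑ a, μ.real (bad a) := measureReal_iUnion_fintype_le bad
    _ ≤ ∑ _a : A, δ / Fintype.card A := sum_le_sum fun a _ ↦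
      (measure_abs_empiricalMean_sub_ge_le hNpos (hmeas a) (hindep a) (hbdd a) (hmean a)
        hε.le).trans (two_mul_exp_neg_le_div_of_log_div_le (by linarith) hδ0 hε hN)
    _ = δ := by
      rw [sum_const, card_univ, nsmul_eq_mul]
      field_simp
  set good := {ω : Ω | m (ahat ω) ≥ Finset.univ.sup' Finset.univ_nonempty m - 2 * ε}
  have hgood : (⋃ a, bad a)ᶜ ⊆ good := fun ω hω ↦ by
    simp only [Set.mem_compl_iff, Set.mem_iUnion, not_exists, bad, Set.mem_ofPred_eq,
      not_le] at hω
    exact sub_le_iff_le_add.2 <| sup'_le_add_two_mul_of_abs_sub_lt univ_nonempty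
      (fun a _ ↦ hω a) (mem_univ _) fun a _ ↦ hahat ω a
  have hcover := measureReal_union_le (μ := μ) (⋃ a, bad a) (⋃ a, bad a)ᶜ
  rw [Set.union_compl_self, probReal_univ] at hcover
  refine ENNReal.ofReal_le_of_le_toReal (?_ : 1 - δ ≤ μ.real good)
  linarith [measureReal_mono (μ := μ) hgood]
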